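/- The Cramér GAN surrogate divergence D_c(P,Q) = E ρ(X,X') + E ρ(Y,0) − E ρ(X,0) − E ρ(X',Y) fails to separate distributions: taking ρ(x,y) = |x − y| on ℝ, P the point mass at 0 and Q the point mass at any t > 0, one has P ≠ Q yet D_c(P,Q) = 0. -/
import Mathlib


open MeasureTheory

/-- The Cramér GAN surrogate divergence fails to separate distributions: with
`ρ(x,y) = |x - y|`, `P = δ₀` and `Q = δ_t` for `t > 0`, we have `P ≠ Q` yet the surrogate
`E ρ(X,X') + E ρ(Y,0) - E ρ(X,0) - E ρ(X',Y)` equals zero. -/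
theorem cramer_surrogate_not_separating (t : ℝ) (ht : 0 < t) :
    (Measure.dirac (0 : ℝ)) ≠ Measure.dirac t
      ∧ (∫ p : ℝ × ℝ, |p.1 - p.2| ∂((Measure.dirac (0 : ℝ)).prod (Measure.dirac (0 : ℝ))))
          + (∫ y : ℝ, |y - 0| ∂(Measure.dirac t))
          - (∫ x : ℝ, |x - 0| ∂(Measure.dirac (0 : ℝ)))
          - (∫ p : ℝ × ℝ, |p.1 - p.2| ∂((Measure.dirac (0 : ℝ)).prod (Measure.dirac t)))
        = 0 := by
  constructor
  · intro h
    have := congrArg (fun μ : Measure ℝ => μ {0}) h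
    simp [Measure.dirac_apply' _ (measurableSet_singleton (0:ℝ)),
      Set.indicator, ht.ne'] at this
  · rw [Measure.dirac_prod_dirac, Measure.dirac_prod_dirac,
      integral_dirac, integral_dirac, integral_dirac, integral_dirac]
    simp [abs_of_pos ht]
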